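/- arXiv:2212.05060 — 3 statements merged into one kernel-verified Lean document; each statement's English description precedes it below -/
import Mathlib

section
/- Let X be a real Banach space such that for every extreme point x* of the closed unit ball of X*, span{x*} is an L-summand of X* (X* = span{x*} ⊕₁ N for some closed subspace N). Then every very smooth point x of X with ‖x‖ = 1 is a QP point of X. -/
open Filter Topology Metric Set NormedSpace MeasureTheory

noncomputable section

/-- The norm of `X` is Fréchet differentiable at `x`: there is a continuous linear
functional `f` with `lim_{y→0} (‖x+y‖ - ‖x‖ - f y)/‖y‖ = 0`. -/
def FrechetSmoothPoint (X : Type*) [NormedAddCommGroup X] [NormedSpace ℝ X] (x : X) : Prop :=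
  ∃ f : X →L[ℝ] ℝ,
    Tendsto (fun y : X => (‖x + y‖ - ‖x‖ - f y) / ‖y‖) (𝓝[≠] (0 : X)) (𝓝 0)

/-- `x` is a smooth point: it is nonzero and there is exactly one norm-one functional
attaining the norm at `x`. -/
def SmoothPoint (X : Type*) [NormedAddCommGroup X] [NormedSpace ℝ X] (x : X) : Prop :=
  x ≠ 0 ∧ ∃! f : StrongDual ℝ X, ‖f‖ = 1 ∧ f x = ‖x‖

/-- `x` is a very smooth point: it is a smooth point whose canonical image in the bidual
is a smooth point of the bidual. -/
def VerySmoothPoint (X : Type*) [NormedAddCommGroup X] [NormedSpace ℝ X] (x : X) : Prop :=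
  SmoothPoint X x ∧ SmoothPoint (StrongDual ℝ (StrongDual ℝ X)) (inclusionInDoubleDual ℝ X x)

/-- `X = M ⊕_∞ N`: `M, N` are closed subspaces with trivial intersection whose sum is
everything, and `‖m + n‖ = max ‖m‖ ‖n‖` for `m ∈ M`, `n ∈ N`. -/
def MSumDecomp {X : Type*} [NormedAddCommGroup X] [NormedSpace ℝ X]
    (M N : Submodule ℝ X) : Prop :=
  IsClosed (M : Set X) ∧ IsClosed (N : Set X) ∧ M ⊓ N = ⊥ ∧ M ⊔ N = ⊤ ∧
    ∀ m ∈ M, ∀ n ∈ N, ‖m + n‖ = max ‖m‖ ‖n‖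

/-- `X = M ⊕₁ N`: `M, N` are closed subspaces with trivial intersection whose sum is
everything, and `‖m + n‖ = ‖m‖ + ‖n‖` for `m ∈ M`, `n ∈ N`; such `M` is an L-summand. -/
def LSumDecomp {X : Type*} [NormedAddCommGroup X] [NormedSpace ℝ X]
    (M N : Submodule ℝ X) : Prop :=
  IsClosed (M : Set X) ∧ IsClosed (N : Set X) ∧ M ⊓ N = ⊥ ∧ M ⊔ N = ⊤ ∧
    ∀ m ∈ M, ∀ n ∈ N, ‖m + n‖ = ‖m‖ + ‖n‖

/-- The state space `S_x` of a vector `x`. -/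
def StateSpace {X : Type*} [NormedAddCommGroup X] [NormedSpace ℝ X] (x : X) :
    Set (StrongDual ℝ X) :=
  {f : StrongDual ℝ X | ‖f‖ ≤ 1 ∧ f x = 1}

/-- `x` is a quasi-polyhedral (QP) point: for some `δ > 0`, every norm-one `z` with
`‖z - x‖ < δ` has `S_z ⊆ S_x`. -/
def QPPoint (X : Type*) [NormedAddCommGroup X] [NormedSpace ℝ X] (x : X) : Prop :=
  ∃ δ > (0 : ℝ), ∀ z : X, ‖z‖ = 1 → ‖z - x‖ < δ → StateSpace z ⊆ StateSpace x

/-- `X` is an `L¹`-predual space: `X*` is isometrically isomorphic to `L¹(μ)` for some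
(positive) measure `μ`. -/
def IsL1Predual (X : Type*) [NormedAddCommGroup X] [NormedSpace ℝ X] : Prop :=
  ∃ (α : Type) (_ : MeasurableSpace α) (μ : Measure α),
    Nonempty (StrongDual ℝ X ≃ₗᵢ[ℝ] Lp ℝ 1 μ)


/-! The unique state `f` of `x` is an extreme point of the dual ball, so `X* = span {f} ⊕₁ N`.
If `x` is not QP, there are norm-one `zₙ → x` with states `gₙ ∉ S_x`. Since `zₙ` is close to `x`,
`gₙ` is not a multiple of `f`, and then the normalized `N`-part of `gₙ` is again a state of `zₙ`:
this gives `uₙ ∈ N ∩ S_{zₙ}`, so `uₙ x → 1`. Very smoothness makes the image of `f` the unique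
state of `x` in `X**`, and Banach–Alaoglu (Šmulyan's argument) then forces `uₙ → f` weakly in
`X*`. A functional on `X*` vanishing on the closed subspace `N` and equal to `1` at `f` now
takes the value `0` along a sequence converging to `1`. -/

section StateSpace

variable {X : Type*} [NormedAddCommGroup X] [NormedSpace ℝ X]

lemma apply_le_norm_of_norm_le_one (g : StrongDual ℝ X) {x : X} (hx : ‖x‖ ≤ 1) : g x ≤ ‖g‖ :=
  (le_abs_self _).trans <| by simpa using g.le_opNorm_of_le hx

lemma norm_eq_one_of_mem_stateSpace {x : X} {g : StrongDual ℝ X} (hx : ‖x‖ ≤ 1)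
    (hg : g ∈ StateSpace x) : ‖g‖ = 1 :=
  le_antisymm hg.1 (hg.2 ▸ apply_le_norm_of_norm_le_one g hx)

lemma qpPoint_iff_eventually {x : X} :
    QPPoint X x ↔ ∀ᶠ z in 𝓝 x, ‖z‖ = 1 → StateSpace z ⊆ StateSpace x := by
  simp only [QPPoint, Metric.eventually_nhds_iff, dist_eq_norm]
  exact exists_congr fun δ => and_congr_right fun _ => forall_congr' fun z => imp.swap

lemma isExtreme_closedBall_stateSpace {x : X} (hx : ‖x‖ ≤ 1) :
    IsExtreme ℝ (closedBall (0 : StrongDual ℝ X) 1) (StateSpace x) := by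
  refine ⟨fun g hg => mem_closedBall_zero_iff.2 hg.1, ?_⟩
  rintro g hg h hh f hf ⟨a, b, ha, hb, hab, rfl⟩
  rw [mem_closedBall_zero_iff] at hg hh
  have hgx := (apply_le_norm_of_norm_le_one g hx).trans hg
  have hhx := (apply_le_norm_of_norm_le_one h hx).trans hh
  have hfx : a * g x + b * h x = 1 := by simpa using hf.2
  exact ⟨hg, by nlinarith⟩

lemma mem_extremePoints_of_stateSpace_eq_singleton {x : X} {f : StrongDual ℝ X} (hx : ‖x‖ ≤ 1)
    (h : StateSpace x = {f}) : f ∈ (closedBall (0 : StrongDual ℝ X) 1).extremePoints ℝ := by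
  have := (isExtreme_closedBall_stateSpace hx).extremePoints_subset_extremePoints
  rw [h, extremePoints_singleton] at this
  exact this rfl

lemma SmoothPoint.stateSpace_eq_singleton {x : X} (hx : SmoothPoint X x) (hx1 : ‖x‖ = 1)
    {f : StrongDual ℝ X} (hf : f ∈ StateSpace x) : StateSpace x = {f} := by
  have hnorming {g} (hg : g ∈ StateSpace x) : ‖g‖ = 1 ∧ g x = ‖x‖ :=
    ⟨norm_eq_one_of_mem_stateSpace hx1.le hg, hg.2.trans hx1.symm⟩
  exact Set.eq_singleton_iff_unique_mem.2
    ⟨hf, fun g hg => hx.2.unique (hnorming hg) (hnorming hf)⟩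

lemma LSumDecomp.exists_mem_stateSpace {M N : Submodule ℝ (StrongDual ℝ X)}
    (hMN : LSumDecomp M N) {z : X} (hz : ‖z‖ ≤ 1) {g : StrongDual ℝ X} (hg : g ∈ StateSpace z)
    (hgM : g ∉ M) : ∃ u ∈ N, u ∈ StateSpace z := by
  obtain ⟨-, -, -, hsup, hnorm⟩ := hMN
  obtain ⟨a, ha, m, hm, rfl⟩ := Submodule.mem_sup.1 (hsup ▸ Submodule.mem_top : g ∈ M ⊔ N)
  have hm0 : m ≠ 0 := by rintro rfl; exact hgM (by simpa using ha)
  -- `‖a‖ + ‖m‖ ≤ 1 = a z + m z` and `a z ≤ ‖a‖`, so `m` attains its norm at `z`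
  have hmz : ‖m‖ ≤ m z := by
    have h1 := hnorm a ha m hm ▸ hg.1
    have h2 : a z + m z = 1 := by simpa using hg.2
    linarith [apply_le_norm_of_norm_le_one a hz]
  have hu1 : ‖‖m‖⁻¹ • m‖ = 1 := norm_smul_inv_norm hm0
  refine ⟨‖m‖⁻¹ • m, N.smul_mem _ hm, hu1.le, le_antisymm ?_ ?_⟩
  · exact hu1 ▸ apply_le_norm_of_norm_le_one _ hz
  · rwa [smul_apply, smul_eq_mul, le_inv_mul_iff₀ (norm_pos_iff.2 hm0), mul_one]

lemma mem_stateSpace_of_mem_span_singleton {x z : X} (hx : ‖x‖ ≤ 1) (hz : ‖z‖ ≤ 1)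
    (hzx : ‖z - x‖ < 1) {f g : StrongDual ℝ X} (hf : f ∈ StateSpace x) (hg : g ∈ StateSpace z)
    (hgf : g ∈ Submodule.span ℝ {f}) : g ∈ StateSpace x := by
  obtain ⟨c, rfl⟩ := Submodule.mem_span_singleton.1 hgf
  have hc : |c| ≤ 1 := by
    simpa [norm_smul, norm_eq_one_of_mem_stateSpace hx hf] using hg.1
  have hfz : f z ≤ 1 := (apply_le_norm_of_norm_le_one f hz).trans hf.1
  have hfz_pos : 0 < f z := by
    have h := f.le_of_opNorm_le hf.1 (z - x)
    rw [map_sub, hf.2, Real.norm_eq_abs, one_mul] at h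
    linarith [neg_abs_le (f z - 1)]
  have hcz : c * f z = 1 := by simpa using hg.2
  obtain rfl : c = 1 := by nlinarith [abs_le.1 hc]
  simpa using hf

lemma tendsto_apply_of_mem_stateSpace {x : X} {ι : Type*} {l : Filter ι} {z : ι → X}
    (hz : Tendsto z l (𝓝 x)) {g : ι → StrongDual ℝ X} (hg : ∀ i, g i ∈ StateSpace (z i)) :
    Tendsto (fun i => g i x) l (𝓝 1) := by
  rw [tendsto_iff_norm_sub_tendsto_zero] at hz ⊢
  refine squeeze_zero (fun i => norm_nonneg _) (fun i => ?_) hz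
  calc ‖g i x - 1‖ = ‖g i (x - z i)‖ := by rw [map_sub, (hg i).2]
    _ ≤ ‖x - z i‖ := ((g i).le_of_opNorm_le (hg i).1 _).trans_eq (one_mul _)
    _ = ‖z i - x‖ := norm_sub_rev _ _

lemma Submodule.exists_dual_eq_one_of_notMem {N : Submodule ℝ X} (hN : IsClosed (N : Set X))
    {w : X} (hw : w ∉ N) : ∃ τ : StrongDual ℝ X, τ w = 1 ∧ ∀ m ∈ N, τ m = 0 := by
  have := hN
  obtain ⟨φ, hφ⟩ := SeparatingDual.exists_eq_one (R := ℝ) (x := N.mkQ w)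
    (by simpa [Submodule.Quotient.mk_eq_zero] using hw)
  exact ⟨φ.comp N.mkQL, hφ, fun m hm => by simp [(Submodule.Quotient.mk_eq_zero N).2 hm]⟩

theorem tendsto_toWeakDual_of_stateSpace_subset {y : X} {φ : StrongDual ℝ X}
    (hφ : StateSpace y ⊆ {φ}) {ι : Type*} {l : Filter ι} {g : ι → StrongDual ℝ X}
    (hg : ∀ i, ‖g i‖ ≤ 1) (hgy : Tendsto (fun i => g i y) l (𝓝 1)) :
    Tendsto (fun i => StrongDual.toWeakDual (g i)) l (𝓝 (StrongDual.toWeakDual φ)) := by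
  refine (WeakDual.isCompact_closedBall 0 1).tendsto_nhds_of_unique_mapClusterPt
    (Eventually.of_forall fun i => by simpa using hg i) fun ψ hψ hclust => ?_
  have hψy : ClusterPt (ψ y) (𝓝 1) :=
    (show ClusterPt (ψ y) (map (fun i => g i y) l) from
      hclust.tendsto_comp ((WeakDual.eval_continuous y).tendsto ψ)).mono hgy
  replace hψy : ψ y = 1 := tendsto_nhds_unique' hψy (tendsto_inf_left tendsto_id)
    (tendsto_inf_right tendsto_id)
  exact congrArg StrongDual.toWeakDual
    (hφ (a := WeakDual.toStrongDual ψ) ⟨mem_closedBall_zero_iff.1 hψ, hψy⟩)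

lemma VerySmoothPoint.tendsto_apply {x : X} (hx : VerySmoothPoint X x) (hx1 : ‖x‖ = 1)
    {f : StrongDual ℝ X} (hf : f ∈ StateSpace x) {ι : Type*} {l : Filter ι}
    {g : ι → StrongDual ℝ X} (hg : ∀ i, ‖g i‖ ≤ 1) (hgx : Tendsto (fun i => g i x) l (𝓝 1))
    (τ : StrongDual ℝ (StrongDual ℝ X)) : Tendsto (fun i => τ (g i)) l (𝓝 (τ f)) := by
  let J := inclusionInDoubleDual ℝ (StrongDual ℝ X)
  have hx1' : ‖inclusionInDoubleDual ℝ X x‖ = 1 :=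
    ((inclusionInDoubleDualLi ℝ (E := X)).norm_map x).trans hx1
  have hJf : J f ∈ StateSpace (inclusionInDoubleDual ℝ X x) :=
    ⟨(double_dual_bound ℝ _ f).trans hf.1, hf.2⟩
  exact ((WeakDual.eval_continuous τ).tendsto _).comp <|
    tendsto_toWeakDual_of_stateSpace_subset (hx.2.stateSpace_eq_singleton hx1' hJf).subset
      (g := fun i => J (g i)) (fun i => (double_dual_bound ℝ _ _).trans (hg i)) hgx

end StateSpace

theorem qp_point_of_very_smooth_of_extreme_L_summands_general
    {X : Type*} [NormedAddCommGroup X] [NormedSpace ℝ X]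
    (hL : ∀ f ∈ Set.extremePoints ℝ (closedBall (0 : StrongDual ℝ X) 1),
      ∃ N : Submodule ℝ (StrongDual ℝ X), LSumDecomp (Submodule.span ℝ {f}) N)
    (x : X) (hx1 : ‖x‖ = 1) (hx : VerySmoothPoint X x) :
    QPPoint X x := by
  obtain ⟨f, hfn, hfx⟩ := hx.1.2.exists
  have hf : f ∈ StateSpace x := ⟨hfn.le, hfx.trans hx1⟩
  have hSx := hx.1.stateSpace_eq_singleton hx1 hf
  obtain ⟨N, hN⟩ := hL f (mem_extremePoints_of_stateSpace_eq_singleton hx1.le hSx)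
  have hfN : f ∉ N := (Submodule.disjoint_span_singleton' (norm_ne_zero_iff.1 (by simp [hfn]))).1
    (disjoint_iff.2 hN.2.2.1).symm
  obtain ⟨τ, hτf, hτN⟩ := Submodule.exists_dual_eq_one_of_notMem hN.2.1 hfN
  by_contra hQP
  rw [qpPoint_iff_eventually, not_eventually] at hQP
  have hfreq : ∃ᶠ z in 𝓝 x, ∃ u ∈ N, u ∈ StateSpace z := by
    refine (hQP.and_eventually (ball_mem_nhds x one_pos)).mono fun z ⟨hz, hzx⟩ => ?_
    obtain ⟨hz1, g, hg, hgx⟩ : ‖z‖ = 1 ∧ ∃ g ∈ StateSpace z, g ∉ StateSpace x := by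
      simpa [Set.not_subset] using hz
    exact hN.exists_mem_stateSpace hz1.le hg fun hgf =>
      hgx (mem_stateSpace_of_mem_span_singleton hx1.le hz1.le (mem_ball_iff_norm.1 hzx) hf hg hgf)
  obtain ⟨z, hzx, hzN⟩ := exists_seq_forall_of_frequently hfreq
  choose u huN hu using hzN
  have hτu := hx.tendsto_apply hx1 hf (fun n => (hu n).1) (tendsto_apply_of_mem_stateSpace hzx hu) τ
  simp only [hτN _ (huN _), hτf] at hτu
  exact zero_ne_one (tendsto_nhds_unique tendsto_const_nhds hτu)

theorem qp_point_of_very_smooth_of_extreme_L_summands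
    {X : Type*} [NormedAddCommGroup X] [NormedSpace ℝ X] [CompleteSpace X]
    (hL : ∀ f ∈ Set.extremePoints ℝ (closedBall (0 : StrongDual ℝ X) 1),
      ∃ N : Submodule ℝ (StrongDual ℝ X), LSumDecomp (Submodule.span ℝ {f}) N)
    (x : X) (hx1 : ‖x‖ = 1) (hx : VerySmoothPoint X x) :
    QPPoint X x :=
  qp_point_of_very_smooth_of_extreme_L_summands_general hL x hx1 hx
end
end

section
/- Let Ω be a compact Hausdorff space and X a real Banach space such that every very smooth point of X of norm one is a QP point of X. Then every very smooth point f of C(Ω, X) with ‖f‖ = 1 is a QP point of C(Ω, X). -/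
open Filter Topology Metric Set NormedSpace MeasureTheory

noncomputable section

/-! A norm-one very smooth `f ∈ C(Ω, X)` peaks at a single point `ω₀`: two peaks would give two
distinct norming functionals `x' ∘ δ_ω`. That point is isolated: otherwise a weak-* limit of
`x' ∘ δ_ω` as `ω → ω₀`, `ω ≠ ω₀`, and `x' ∘ δ_{ω₀}` would be two norming functionals of `f` in
the third dual, told apart by a weak-* limit of bumps `u • f` shrinking to `ω₀`. So
`g ↦ 𝟙_{ω₀} g(ω₀)` is an M-projection of `C(Ω, X)` onto a copy of `X`; `f(ω₀)` inherits very
smoothness from `f` and is therefore QP. Since `‖f‖ < 1` away from `ω₀`, every state of a nearby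
`g` vanishes on the complementary summand (the dual splits as an L¹-sum), so it is a state of
`f(ω₀)` composed with evaluation at `ω₀`, hence a state of `f`. -/
open ContinuousLinearMap TopologicalSpace

section Dual

variable {E F : Type*} [NormedAddCommGroup E] [NormedSpace ℝ E]
  [NormedAddCommGroup F] [NormedSpace ℝ F]

def ContinuousLinearMap.dualMap (T : E →L[ℝ] F) : StrongDual ℝ F →L[ℝ] StrongDual ℝ E :=
  LinearMap.mkContinuous ((compL ℝ E F ℝ).flip T).toLinearMap ‖T‖ fun φ =>
    (opNorm_comp_le φ T).trans_eq (mul_comm _ _)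

@[simp]
theorem ContinuousLinearMap.dualMap_apply (T : E →L[ℝ] F) (φ : StrongDual ℝ F) :
    T.dualMap φ = φ.comp T :=
  rfl

theorem ContinuousLinearMap.norm_dualMap_le (T : E →L[ℝ] F) : ‖T.dualMap‖ ≤ ‖T‖ :=
  LinearMap.mkContinuous_norm_le _ (norm_nonneg T) _

theorem norm_eq_one_of_apply_eq_norm {φ : StrongDual ℝ E} {x : E} (hφ : ‖φ‖ ≤ 1) (hx : x ≠ 0)
    (h : φ x = ‖x‖) : ‖φ‖ = 1 := by
  refine le_antisymm hφ ((le_mul_iff_one_le_left (norm_pos_iff.2 hx)).1 ?_)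
  simpa [h] using φ.le_opNorm x

theorem exists_norm_le_one_lt_apply (φ : StrongDual ℝ E) {c : ℝ} (hc : c < ‖φ‖) :
    ∃ x, ‖x‖ ≤ 1 ∧ c < φ x := by
  obtain ⟨x, hx, hcx⟩ := φ.exists_lt_apply_of_lt_opNorm hc
  rcases le_or_gt 0 (φ x) with h | h
  · exact ⟨x, hx.le, by rwa [Real.norm_of_nonneg h] at hcx⟩
  · exact ⟨-x, by simpa using hx.le, by rwa [Real.norm_of_nonpos h.le, ← map_neg] at hcx⟩

/-- Banach–Alaoglu. -/
theorem exists_tendsto_apply_of_norm_le {ι : Type*} (𝒰 : Ultrafilter ι)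
    (v : ι → StrongDual ℝ E) {C : ℝ} (hv : ∀ i, ‖v i‖ ≤ C) :
    ∃ φ : StrongDual ℝ E, ‖φ‖ ≤ C ∧ ∀ x, Tendsto (fun i => v i x) 𝒰 (𝓝 (φ x)) := by
  obtain ⟨φ, hφ, hlim⟩ :=
    (WeakDual.isCompact_closedBall (0 : StrongDual ℝ E) C).ultrafilter_le_nhds
      (𝒰.map (StrongDual.toWeakDual ∘ v)) (by
        rw [Ultrafilter.coe_map, le_principal_iff]
        exact Filter.mem_map.2 (Eventually.of_forall fun i => by simpa using hv i))
  exact ⟨WeakDual.toStrongDual φ, by simpa using hφ,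
    fun x => ((WeakDual.eval_continuous x).tendsto φ).comp hlim⟩

@[simp]
theorem norm_inclusionInDoubleDual_apply (x : E) : ‖inclusionInDoubleDual ℝ E x‖ = ‖x‖ :=
  (inclusionInDoubleDualLi ℝ).norm_map x

theorem SmoothPoint.map_of_surjective {r : E →L[ℝ] F} (hr : ‖r‖ ≤ 1)
    (hsurj : Function.Surjective r) {y : E} (hy : SmoothPoint E y) (hry : ‖r y‖ = ‖y‖) :
    SmoothPoint F (r y) := by
  have hry0 : r y ≠ 0 := norm_ne_zero_iff.1 (hry ▸ norm_ne_zero_iff.2 hy.1)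
  have hlift : ∀ φ : StrongDual ℝ F, ‖φ‖ = 1 ∧ φ (r y) = ‖r y‖ →
      ‖φ.comp r‖ = 1 ∧ φ.comp r y = ‖y‖ := by
    rintro φ ⟨hφ, hφy⟩
    have h : φ.comp r y = ‖y‖ := hφy.trans hry
    exact ⟨norm_eq_one_of_apply_eq_norm ((opNorm_comp_le φ r).trans (by rwa [hφ, one_mul]))
      hy.1 h, h⟩
  obtain ⟨φ, hφ⟩ := exists_dual_vector ℝ (r y) (norm_ne_zero_iff.2 hry0)
  refine ⟨hry0, φ, hφ, fun ψ hψ => ?_⟩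
  have h := hy.2.unique (hlift ψ hψ) (hlift φ hφ)
  ext x
  obtain ⟨y', rfl⟩ := hsurj x
  exact congr($h y')

theorem VerySmoothPoint.map_of_rightInverse {r : E →L[ℝ] F} {e : F →L[ℝ] E} (hr : ‖r‖ ≤ 1)
    (hre : ∀ x, r (e x) = x) {y : E} (hy : VerySmoothPoint E y) (hry : ‖r y‖ = ‖y‖) :
    VerySmoothPoint F (r y) := by
  have hj : r.dualMap.dualMap (inclusionInDoubleDual ℝ E y) = inclusionInDoubleDual ℝ F (r y) :=
    rfl
  refine ⟨hy.1.map_of_surjective hr (fun x => ⟨e x, hre x⟩) hry, hj ▸ ?_⟩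
  refine hy.2.map_of_surjective ((norm_dualMap_le _).trans ((norm_dualMap_le r).trans hr))
    (fun ξ => ⟨e.dualMap.dualMap ξ, ?_⟩) ?_
  · ext φ
    simp only [dualMap_apply, comp_apply]
    congr 1
    ext x
    simp [hre]
  · simpa only [hj, norm_inclusionInDoubleDual_apply] using hry

end Dual

section MProjection

variable {E F : Type*} [NormedAddCommGroup E] [NormedSpace ℝ E]
  [NormedAddCommGroup F] [NormedSpace ℝ F]

theorem IsMprojection.norm_apply_le {P : E →L[ℝ] E} (hP : IsMprojection E P) (x : E) :
    ‖P x‖ ≤ ‖x‖ ∧ ‖(1 - P) x‖ ≤ ‖x‖ := by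
  rw [hP.Mnorm x]
  exact ⟨le_max_left _ _, le_max_right _ _⟩

/-- The transpose of an M-projection is an L-projection; only the nontrivial inequality is
stated. -/
theorem IsMprojection.norm_comp_add_norm_comp_le {P : E →L[ℝ] E} (hP : IsMprojection E P)
    (Λ : StrongDual ℝ E) : ‖Λ.comp P‖ + ‖Λ.comp (1 - P)‖ ≤ ‖Λ‖ := by
  have hPP : ∀ x, P (P x) = P x := fun x => congr($hP.proj x)
  have hQ : ∀ x, (1 - P) x = x - P x := fun x => rfl
  have hball : ∀ a b : E, ‖a‖ ≤ 1 → ‖b‖ ≤ 1 → ‖P a + (1 - P) b‖ ≤ 1 := by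
    intro a b ha hb
    have hPx : P (P a + (1 - P) b) = P a := by
      simp only [hQ, map_add, map_sub, hPP, sub_self, add_zero]
    rw [hP.Mnorm, ContinuousLinearMap.smul_def, ContinuousLinearMap.smul_def, hPx, hQ, hPx,
      add_sub_cancel_left]
    exact max_le ((hP.norm_apply_le a).1.trans ha) ((hP.norm_apply_le b).2.trans hb)
  refine le_of_forall_pos_lt_add fun ε hε => ?_
  obtain ⟨a, ha, hΛa⟩ := exists_norm_le_one_lt_apply (Λ.comp P) (sub_lt_self _ (half_pos hε))
  obtain ⟨b, hb, hΛb⟩ :=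
    exists_norm_le_one_lt_apply (Λ.comp (1 - P)) (sub_lt_self _ (half_pos hε))
  have hΛab : Λ (P a + (1 - P) b) ≤ ‖Λ‖ :=
    calc Λ (P a + (1 - P) b) ≤ ‖Λ‖ * ‖P a + (1 - P) b‖ := (le_abs_self _).trans (Λ.le_opNorm _)
      _ ≤ ‖Λ‖ := mul_le_of_le_one_right (norm_nonneg Λ) (hball a b ha hb)
  rw [map_add] at hΛab
  simp only [comp_apply] at hΛa hΛb
  linarith

theorem QPPoint.of_isMprojection {e : F →L[ℝ] E} {r : E →L[ℝ] F} (he : ∀ x, ‖e x‖ = ‖x‖)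
    (hre : ∀ x, r (e x) = x) (hP : IsMprojection E (e.comp r)) {y : E}
    (hy : QPPoint F (r y)) (hgap : ‖y - e (r y)‖ < 1) : QPPoint E y := by
  set P := e.comp r
  have hQ : ∀ x, (1 - P) x = x - e (r x) := fun x => rfl
  have hr : ∀ x, ‖r x‖ ≤ ‖x‖ := fun x => he (r x) ▸ (hP.norm_apply_le x).1
  obtain ⟨δ, hδ, hQP⟩ := hy
  refine ⟨min δ (1 - ‖y - e (r y)‖), lt_min hδ (sub_pos.2 hgap), fun z hz hzy Λ hΛ => ?_⟩
  obtain ⟨hΛ1, hΛz⟩ := hΛ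
  have hQz : ‖(1 - P) z‖ < 1 :=
    calc ‖(1 - P) z‖ = ‖(y - e (r y)) + (1 - P) (z - y)‖ := by
          rw [map_sub, hQ y, add_sub_cancel]
      _ ≤ ‖y - e (r y)‖ + ‖z - y‖ := norm_add_le_of_le le_rfl (hP.norm_apply_le _).2
      _ < 1 := by linarith [min_le_right δ (1 - ‖y - e (r y)‖)]
  have hrz : ‖r z‖ = 1 := by
    refine le_antisymm (hz ▸ hr z) ?_
    have h := hP.Mnorm z
    rw [hz, ContinuousLinearMap.smul_def, ContinuousLinearMap.smul_def, comp_apply, he] at h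
    rcases le_max_iff.1 h.le with h' | h'
    · exact h'
    · exact absurd h' hQz.not_ge
  have hΛQ : Λ.comp (1 - P) = 0 := by
    have hQQ : (1 - P) ((1 - P) z) = (1 - P) z := by
      simp only [hQ, map_sub, hre, sub_self, map_zero, sub_zero]
    have hsplit : Λ z = Λ.comp P z + Λ.comp (1 - P) ((1 - P) z) := by
      change Λ z = Λ (P z) + Λ ((1 - P) ((1 - P) z))
      rw [hQQ, ← map_add, hQ]
      simp [P]
    have hPz : Λ.comp P z ≤ ‖Λ.comp P‖ :=
      (le_abs_self _).trans ((Λ.comp P).le_opNorm z |>.trans_eq (by rw [hz, mul_one]))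
    have hQz' : Λ.comp (1 - P) ((1 - P) z) ≤ ‖Λ.comp (1 - P)‖ * ‖(1 - P) z‖ :=
      (le_abs_self _).trans ((Λ.comp (1 - P)).le_opNorm _)
    have hL := hP.norm_comp_add_norm_comp_le Λ
    have : ‖Λ.comp (1 - P)‖ * (1 - ‖(1 - P) z‖) ≤ 0 := by nlinarith
    exact norm_le_zero_iff.1 (nonpos_of_mul_nonpos_left this (sub_pos.2 hQz))
  have hΛr : ∀ w, Λ w = Λ.comp e (r w) := fun w => by
    have h := congr($hΛQ w)
    rw [comp_apply, zero_apply, hQ, map_sub] at h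
    rw [comp_apply]
    linarith
  have hx' : Λ.comp e ∈ StateSpace (r z) := by
    refine ⟨opNorm_le_bound _ zero_le_one fun x => ?_, by rw [← hΛr]; exact hΛz⟩
    calc ‖Λ (e x)‖ ≤ ‖Λ‖ * ‖e x‖ := Λ.le_opNorm _
      _ ≤ 1 * ‖x‖ := by rw [he]; gcongr
  have hyz := hQP (r z) hrz ?_ hx'
  · exact ⟨hΛ1, (hΛr y).trans hyz.2⟩
  · calc ‖r z - r y‖ ≤ ‖z - y‖ := by rw [← map_sub]; exact hr _
      _ < δ := hzy.trans_le (min_le_left _ _)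

end MProjection

namespace ContinuousMap

variable {Ω : Type*} [TopologicalSpace Ω] [CompactSpace Ω]
  {X : Type*} [NormedAddCommGroup X] [NormedSpace ℝ X]

theorem norm_evalCLM_le (ω : Ω) : ‖(evalCLM ℝ ω : C(Ω, X) →L[ℝ] X)‖ ≤ 1 :=
  opNorm_le_bound _ zero_le_one fun g => by simpa using g.norm_coe_le_norm ω

theorem norm_comp_evalCLM_le (x' : StrongDual ℝ X) (ω : Ω) :
    ‖x'.comp (evalCLM ℝ ω : C(Ω, X) →L[ℝ] X)‖ ≤ ‖x'‖ :=
  (opNorm_comp_le _ _).trans (mul_le_of_le_one_right (norm_nonneg x') (norm_evalCLM_le ω))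

theorem exists_norm_apply_eq_norm {E : Type*} [NormedAddCommGroup E] [Nonempty Ω]
    (f : C(Ω, E)) : ∃ ω, ‖f ω‖ = ‖f‖ := by
  obtain ⟨ω, hω⟩ := (map_continuous f).norm.exists_forall_ge (by simp)
  exact ⟨ω, le_antisymm (f.norm_coe_le_norm ω) (f.norm_le_of_nonempty.2 hω)⟩

theorem exists_norming_comp_evalCLM {f : C(Ω, X)} (hf : f ≠ 0) {ω₀ : Ω} (hω₀ : ‖f ω₀‖ = ‖f‖) :
    ∃ x' : StrongDual ℝ X, ‖x'‖ = 1 ∧ x' (f ω₀) = ‖f‖ ∧ ‖x'.comp (evalCLM ℝ ω₀)‖ = 1 := by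
  obtain ⟨x', hx'1, hx'⟩ := exists_dual_vector ℝ (f ω₀) (hω₀ ▸ norm_ne_zero_iff.2 hf)
  rw [hω₀] at hx'
  exact ⟨x', hx'1, hx',
    norm_eq_one_of_apply_eq_norm ((norm_comp_evalCLM_le x' ω₀).trans hx'1.le) hf hx'⟩

theorem eq_of_norm_apply_eq_norm [T2Space Ω] {f : C(Ω, X)} (hf : SmoothPoint C(Ω, X) f)
    {ω₁ ω₂ : Ω} (h₁ : ‖f ω₁‖ = ‖f‖) (h₂ : ‖f ω₂‖ = ‖f‖) : ω₁ = ω₂ := by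
  by_contra hne
  obtain ⟨x₁, -, hx₁, hΛ₁⟩ := exists_norming_comp_evalCLM hf.1 h₁
  obtain ⟨x₂, -, hx₂, hΛ₂⟩ := exists_norming_comp_evalCLM hf.1 h₂
  have hΛ := hf.2.unique (y₁ := x₁.comp (evalCLM ℝ ω₁)) ⟨hΛ₁, hx₁⟩ ⟨hΛ₂, hx₂⟩
  obtain ⟨u, hu₁, hu₂, -⟩ := exists_continuous_zero_one_of_isClosed isClosed_singleton
    isClosed_singleton (disjoint_singleton.2 hne)
  have h := congr($hΛ (u • f))
  simp only [ContinuousLinearMap.comp_apply, evalCLM_apply, smul_apply', hu₁ rfl, hu₂ rfl,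
    map_zero, hx₂, Pi.zero_apply, Pi.one_apply, zero_smul, one_smul] at h
  exact norm_ne_zero_iff.2 hf.1 h.symm

/-- A weak-* limit of the functions `u • f`, with `u` a Urysohn bump shrinking to `ω₀`: it acts
on point evaluations like the (discontinuous) function `𝟙_{ω₀} • f`. -/
theorem exists_bidual_apply_comp_evalCLM [T2Space Ω] (f : C(Ω, X)) (x' : StrongDual ℝ X)
    (ω₀ : Ω) : ∃ G : StrongDual ℝ (StrongDual ℝ C(Ω, X)),
      G (x'.comp (evalCLM ℝ ω₀)) = x' (f ω₀) ∧ ∀ ω ≠ ω₀, G (x'.comp (evalCLM ℝ ω)) = 0 := by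
  have hbump : ∀ U : OpenNhdsOf ω₀, ∃ u : C(Ω, ℝ),
      EqOn u 0 (U : Set Ω)ᶜ ∧ u ω₀ = 1 ∧ ∀ ω, u ω ∈ Icc (0 : ℝ) 1 := fun U => by
    obtain ⟨u, hu0, hu1, hu⟩ := exists_continuous_zero_one_of_isClosed U.isOpen.isClosed_compl
      isClosed_singleton (disjoint_singleton_right.2 fun h => h U.mem)
    exact ⟨u, hu0, hu1 rfl, hu⟩
  choose u hu0 hu1 hu using hbump
  obtain ⟨G, -, hG⟩ := exists_tendsto_apply_of_norm_le (Ultrafilter.of atBot)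
    (fun U => inclusionInDoubleDual ℝ C(Ω, X) (u U • f)) (C := ‖f‖) fun U => by
      rw [norm_inclusionInDoubleDual_apply]
      refine ((u U • f).norm_le (norm_nonneg f)).2 fun ω => ?_
      rw [smul_apply', norm_smul, Real.norm_of_nonneg (hu U ω).1]
      exact (mul_le_of_le_one_left (norm_nonneg _) (hu U ω).2).trans (f.norm_coe_le_norm ω)
  refine ⟨G, tendsto_nhds_unique (hG _) ?_, fun ω hω => tendsto_nhds_unique (hG _) ?_⟩
  · simp [smul_apply', hu1]
  · have hU : ∀ᶠ U in (Ultrafilter.of (atBot : Filter (OpenNhdsOf ω₀)) : Filter _),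
        u U ω = 0 := by
      refine Ultrafilter.of_le _ ((eventually_le_atBot
        (⟨⟨{ω}ᶜ, isOpen_compl_singleton⟩, hω.symm⟩ : OpenNhdsOf ω₀)).mono fun U hU => ?_)
      exact hu0 U fun hωU => hU hωU rfl
    refine tendsto_const_nhds.congr' (hU.mono fun U hU => ?_)
    simp [smul_apply', hU]

theorem isOpen_singleton_of_verySmoothPoint [T2Space Ω] {f : C(Ω, X)}
    (hf : VerySmoothPoint C(Ω, X) f) {ω₀ : Ω} (hω₀ : ‖f ω₀‖ = ‖f‖) :
    IsOpen ({ω₀} : Set Ω) := by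
  rw [isOpen_singleton_iff_punctured_nhds]
  by_contra hne
  have := Filter.neBot_iff.2 hne
  obtain ⟨x', hx'1, hx', hΛ₀⟩ := exists_norming_comp_evalCLM hf.1.1 hω₀
  set Λ₀ := x'.comp (evalCLM ℝ ω₀ : C(Ω, X) →L[ℝ] X)
  set 𝒰 := Ultrafilter.of (𝓝[≠] ω₀)
  obtain ⟨F, hF1, hF⟩ := exists_tendsto_apply_of_norm_le
    (E := StrongDual ℝ (StrongDual ℝ C(Ω, X))) 𝒰 (C := 1)
    (fun ω => inclusionInDoubleDual ℝ _ (x'.comp (evalCLM ℝ ω : C(Ω, X) →L[ℝ] X))) fun ω => by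
      rw [norm_inclusionInDoubleDual_apply]
      exact (norm_comp_evalCLM_le x' ω).trans hx'1.le
  obtain ⟨G, hGΛ₀, hG⟩ := exists_bidual_apply_comp_evalCLM f x' ω₀
  have h𝒰 : (𝒰 : Filter Ω) ≤ 𝓝[≠] ω₀ := Ultrafilter.of_le _
  have hFf : F (inclusionInDoubleDual ℝ C(Ω, X) f) = ‖f‖ := by
    refine tendsto_nhds_unique (hF _) ?_
    rw [← hx']
    exact ((x'.continuous.comp (map_continuous f)).tendsto ω₀).mono_left
      (h𝒰.trans nhdsWithin_le_nhds)
  have hFG : F G = 0 := tendsto_nhds_unique (hF G) <| tendsto_const_nhds.congr' <|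
    Eventually.mono (h𝒰 self_mem_nhdsWithin) fun ω hω => (hG ω hω).symm
  have hFΛ₀ : F = inclusionInDoubleDual ℝ (StrongDual ℝ C(Ω, X)) Λ₀ := by
    have hFf' :
        F (inclusionInDoubleDual ℝ C(Ω, X) f) = ‖inclusionInDoubleDual ℝ C(Ω, X) f‖ := by
      rw [hFf, norm_inclusionInDoubleDual_apply]
    refine hf.2.2.unique ⟨norm_eq_one_of_apply_eq_norm hF1 hf.2.1 hFf', hFf'⟩ ⟨?_, ?_⟩
    · rw [norm_inclusionInDoubleDual_apply, hΛ₀]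
    · rw [dual_def, dual_def, norm_inclusionInDoubleDual_apply]
      exact hx'
  rw [hFΛ₀, dual_def, hGΛ₀, hx'] at hFG
  exact norm_ne_zero_iff.2 hf.1.1 hFG

section Single

variable [T1Space Ω] {ω₀ : Ω}

def singleCLM (h : IsOpen ({ω₀} : Set Ω)) : X →L[ℝ] C(Ω, X) :=
  LinearMap.mkContinuous
    { toFun := fun x => ⟨({ω₀} : Set Ω).indicator fun _ => x,
        IsClopen.continuous_indicator ⟨isClosed_singleton, h⟩ continuous_const⟩
      map_add' := fun x y => by ext ω; by_cases hω : ω = ω₀ <;> simp [hω]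
      map_smul' := fun c x => by ext ω; by_cases hω : ω = ω₀ <;> simp [hω] }
    1 fun x => by
      refine (norm_le _ (by positivity)).2 fun ω => ?_
      by_cases hω : ω = ω₀ <;> simp [hω]

variable (h : IsOpen ({ω₀} : Set Ω))

@[simp]
theorem singleCLM_apply_self (x : X) : singleCLM h x ω₀ = x := by
  simp [singleCLM]

theorem singleCLM_apply_of_ne (x : X) {ω : Ω} (hω : ω ≠ ω₀) : singleCLM h x ω = 0 := by
  simp [singleCLM, hω]

theorem norm_singleCLM_apply (x : X) : ‖singleCLM h x‖ = ‖x‖ := by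
  refine le_antisymm ((norm_le _ (norm_nonneg x)).2 fun ω => ?_) ?_
  · by_cases hω : ω = ω₀
    · simp [hω]
    · simp [singleCLM_apply_of_ne h x hω]
  · simpa using (singleCLM h x).norm_coe_le_norm ω₀

theorem isMprojection_singleCLM_comp_evalCLM :
    IsMprojection C(Ω, X) ((singleCLM h : X →L[ℝ] C(Ω, X)).comp (evalCLM ℝ ω₀)) where
  proj := by
    ext g ω
    simp
  Mnorm g := by
    simp only [ContinuousLinearMap.smul_def, _root_.sub_apply, ContinuousLinearMap.comp_apply,
      evalCLM_apply, norm_singleCLM_apply]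
    refine le_antisymm ((norm_le _ (by positivity)).2 fun ω => ?_)
      (max_le (g.norm_coe_le_norm ω₀) ((norm_le _ (norm_nonneg g)).2 fun ω => ?_))
    · by_cases hω : ω = ω₀
      · subst hω
        exact le_max_left _ _
      · refine le_max_of_le_right ?_
        simpa [singleCLM_apply_of_ne h _ hω] using
          (g - singleCLM h (g ω₀)).norm_coe_le_norm ω
    · by_cases hω : ω = ω₀
      · simp [hω]
      · simpa [singleCLM_apply_of_ne h _ hω] using g.norm_coe_le_norm ω

end Single

end ContinuousMap

theorem qp_point_of_very_smooth_continuousMap_general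
    {Ω : Type*} [TopologicalSpace Ω] [CompactSpace Ω] [T2Space Ω]
    {X : Type*} [NormedAddCommGroup X] [NormedSpace ℝ X]
    (hX : ∀ x : X, ‖x‖ = 1 → VerySmoothPoint X x → QPPoint X x)
    (f : C(Ω, X)) (hf1 : ‖f‖ = 1) (hf : VerySmoothPoint C(Ω, X) f) :
    QPPoint C(Ω, X) f := by
  obtain ⟨ω, -⟩ := DFunLike.ne_iff.1 hf.1.1
  have : Nonempty Ω := ⟨ω⟩
  obtain ⟨ω₀, hω₀⟩ := f.exists_norm_apply_eq_norm
  have hpeak : ∀ ω ≠ ω₀, ‖f ω‖ < 1 := fun ω hω =>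
    (hf1 ▸ f.norm_coe_le_norm ω).lt_of_ne fun h =>
      hω (ContinuousMap.eq_of_norm_apply_eq_norm hf.1 (h.trans hf1.symm) hω₀)
  have hiso := ContinuousMap.isOpen_singleton_of_verySmoothPoint hf hω₀
  have hvs : VerySmoothPoint X (f ω₀) :=
    hf.map_of_rightInverse (e := ContinuousMap.singleCLM hiso) (ContinuousMap.norm_evalCLM_le ω₀)
      (ContinuousMap.singleCLM_apply_self hiso) hω₀
  refine QPPoint.of_isMprojection (ContinuousMap.norm_singleCLM_apply hiso)
    (ContinuousMap.singleCLM_apply_self hiso)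
    (ContinuousMap.isMprojection_singleCLM_comp_evalCLM hiso) (hX _ (hω₀.trans hf1) hvs) ?_
  refine ((f - _).norm_lt_iff one_pos).2 fun ω => ?_
  by_cases hω : ω = ω₀
  · simp [hω]
  · simpa [ContinuousMap.singleCLM_apply_of_ne hiso _ hω] using hpeak ω hω

theorem qp_point_of_very_smooth_continuousMap
    {Ω : Type*} [TopologicalSpace Ω] [CompactSpace Ω] [T2Space Ω]
    {X : Type*} [NormedAddCommGroup X] [NormedSpace ℝ X] [CompleteSpace X]
    (hX : ∀ x : X, ‖x‖ = 1 → VerySmoothPoint X x → QPPoint X x)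
    (f : C(Ω, X)) (hf1 : ‖f‖ = 1) (hf : VerySmoothPoint C(Ω, X) f) :
    QPPoint C(Ω, X) f :=
  qp_point_of_very_smooth_continuousMap_general hX f hf1 hf
end
end

section
/- Let X be a real Banach space and x ∈ X a nonzero vector at which the norm of X is Fréchet differentiable. Then the norm of the bidual X** is Fréchet differentiable at the image of x under the canonical embedding of X into X**. -/
open Filter Topology Metric Set NormedSpace MeasureTheory

noncomputable section

/-! Let `f` be the derivative of the norm at `x`, with remainder `‖x + z‖ - ‖x‖ - f z ≤ ε s` for
`‖z‖ ≤ s`. Testing on `x ± z` shows that every `g` with `‖g‖ ≤ 1` obeys Šmulian's estimate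
`s ‖g - f‖ ≤ ε s + (‖x‖ - g x)`. For `Φ` in the bidual with `‖Φ‖ ≤ s` the defect `‖x‖ - g x`
then cancels in `(x + Φ) g = ‖x‖ + Φ f + Φ (g - f) - (‖x‖ - g x) ≤ ‖x‖ + Φ f + ε ‖Φ‖`, and the
supremum over `g` gives `0 ≤ ‖x + Φ‖ - ‖x‖ - Φ f ≤ ε ‖Φ‖`: evaluation at `f` is the derivative
of the bidual norm at `x`. -/

section

variable {E : Type*} [NormedAddCommGroup E] [NormedSpace ℝ E]

theorem tendsto_div_norm_iff_hasFDerivAt {g : E → ℝ} {f : E →L[ℝ] ℝ} {x : E} :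
    Tendsto (fun y => (g (x + y) - g x - f y) / ‖y‖) (𝓝[≠] 0) (𝓝 0) ↔ HasFDerivAt g f x := by
  have hpunctured : 𝓝[insert 0 {0}ᶜ] (0 : E) = 𝓝 0 := by
    rw [insert_eq, union_compl_self, nhdsWithin_univ]
  rw [hasFDerivAt_iff_isLittleO_nhds_zero, ← Asymptotics.isLittleO_norm_right, ← hpunctured,
    Asymptotics.isLittleO_insert (by simp), Asymptotics.isLittleO_iff_tendsto']
  exact Eventually.of_forall fun y hy => by simp [norm_eq_zero.1 hy]

theorem frechetSmoothPoint_iff_differentiableAt {x : E} :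
    FrechetSmoothPoint E x ↔ DifferentiableAt ℝ (‖·‖) x :=
  exists_congr fun _ => tendsto_div_norm_iff_hasFDerivAt

theorem ContinuousLinearMap.apply_le_norm_of_norm_le_one {g : StrongDual ℝ E} (hg : ‖g‖ ≤ 1)
    (v : E) : g v ≤ ‖v‖ :=
  (le_abs_self _).trans ((g.le_of_opNorm_le hg v).trans_eq (one_mul _))

theorem ContinuousLinearMap.norm_le_of_forall_apply_le (φ : StrongDual ℝ E) {C : ℝ}
    (h : ∀ g, ‖g‖ ≤ 1 → φ g ≤ C) : ‖φ‖ ≤ C := by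
  have hball : ∀ g ∈ closedBall (0 : E) 1, ‖φ g‖ ≤ C := fun g hg => by
    rw [mem_closedBall_zero_iff] at hg
    have hneg := h (-g) (by rwa [norm_neg])
    rw [map_neg] at hneg
    exact abs_le.2 ⟨by linarith, h g hg⟩
  simpa using φ.opNorm_bound_of_ball_bound one_pos C hball

theorem norm_sub_le_of_remainder_le {x : E} {f g : StrongDual ℝ E} {s c : ℝ} (hs : 0 < s)
    (hf : ∀ z, ‖z‖ ≤ s → ‖x + z‖ - ‖x‖ - f z ≤ c) (hg : ‖g‖ ≤ 1) :
    ‖g - f‖ ≤ (c + (‖x‖ - g x)) / s := by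
  have hdiff : ∀ z, ‖z‖ ≤ s → (g - f) z ≤ c + (‖x‖ - g x) := fun z hz => by
    have hgxz := g.apply_le_norm_of_norm_le_one hg (x + z)
    have hrem := hf z hz
    simp only [map_add, sub_apply] at hgxz ⊢
    linarith
  refine (g - f).opNorm_bound_of_ball_bound hs _ fun z hz => ?_
  rw [mem_closedBall_zero_iff] at hz
  have hneg := hdiff (-z) (by rwa [norm_neg])
  rw [map_neg] at hneg
  exact abs_le.2 ⟨by linarith, hdiff z hz⟩

theorem norm_inclusionInDoubleDual_add_le {x : E} {f : StrongDual ℝ E} {s ε : ℝ} (hs : 0 < s)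
    (hf : ∀ z, ‖z‖ ≤ s → ‖x + z‖ - ‖x‖ - f z ≤ ε * s) {Φ : StrongDual ℝ (StrongDual ℝ E)}
    (hΦ : ‖Φ‖ ≤ s) : ‖inclusionInDoubleDual ℝ E x + Φ‖ ≤ ‖x‖ + Φ f + ε * ‖Φ‖ := by
  refine ContinuousLinearMap.norm_le_of_forall_apply_le _ fun g hg => ?_
  have hgx : 0 ≤ ‖x‖ - g x := sub_nonneg.2 (g.apply_le_norm_of_norm_le_one hg x)
  have hgf := norm_sub_le_of_remainder_le hs hf hg
  have hΦgf : Φ (g - f) ≤ ε * ‖Φ‖ + (‖x‖ - g x) := calc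
    Φ (g - f) ≤ ‖Φ‖ * ‖g - f‖ := (le_abs_self _).trans (Φ.le_opNorm _)
    _ ≤ ‖Φ‖ * ((ε * s + (‖x‖ - g x)) / s) := by gcongr
    _ = ε * ‖Φ‖ + ‖Φ‖ / s * (‖x‖ - g x) := by field_simp
    _ ≤ ε * ‖Φ‖ + 1 * (‖x‖ - g x) := by gcongr; exact (div_le_one hs).2 hΦ
    _ = ε * ‖Φ‖ + (‖x‖ - g x) := by rw [one_mul]
  simp only [add_apply, dual_def, map_sub] at hΦgf ⊢
  linarith

theorem HasFDerivAt.hasFDerivAt_norm_inclusionInDoubleDual {x : E} {f : StrongDual ℝ E}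
    (h : HasFDerivAt (‖·‖) f x) :
    HasFDerivAt (‖·‖) (inclusionInDoubleDual ℝ (StrongDual ℝ E) f)
      (inclusionInDoubleDual ℝ E x) := by
  have hf_norm : ‖f‖ ≤ 1 := by simpa using h.le_of_lipschitz lipschitzWith_one_norm
  have hfx : f x = ‖x‖ := h.fderiv ▸ h.differentiableAt.fderiv_norm_self
  -- the goal carries the strong-topology instances of `StrongDual`, which `rw` only matches
  -- against the normed ones once every argument is given
  rw [hasFDerivAt_iff_isLittleO_nhds_zero (𝕜 := ℝ)
    (f := fun Φ : StrongDual ℝ (StrongDual ℝ E) => ‖Φ‖)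
    (f' := inclusionInDoubleDual ℝ (StrongDual ℝ E) f) (x := inclusionInDoubleDual ℝ E x),
    Asymptotics.isLittleO_iff]
  intro ε hε
  obtain ⟨s, hs, hrem⟩ : ∃ s > 0, ∀ z, ‖z‖ ≤ s → ‖x + z‖ - ‖x‖ - f z ≤ ε * s := by
    obtain ⟨s, hs, hball⟩ := nhds_basis_closedBall.eventually_iff.1
      ((hasFDerivAt_iff_isLittleO_nhds_zero.1 h).def hε)
    refine ⟨s, hs, fun z hz => ?_⟩
    exact (Real.le_norm_self _).trans ((hball (mem_closedBall_zero_iff.2 hz)).trans (by gcongr))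
  filter_upwards [closedBall_mem_nhds (0 : StrongDual ℝ (StrongDual ℝ E)) hs] with Φ hΦ
  replace hΦ : ‖Φ‖ ≤ s := by rwa [← dist_zero_right Φ]
  have hlower : ‖x‖ + Φ f ≤ ‖inclusionInDoubleDual ℝ E x + Φ‖ := by
    simpa [hfx] using (le_abs_self _).trans
      ((inclusionInDoubleDual ℝ E x + Φ).unit_le_opNorm f hf_norm)
  have hupper := norm_inclusionInDoubleDual_add_le hs hrem hΦ
  have hJx : ‖inclusionInDoubleDual ℝ E x‖ = ‖x‖ := (inclusionInDoubleDualLi ℝ).norm_map x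
  rw [hJx, dual_def, Real.norm_eq_abs, abs_of_nonneg (by linarith)]
  linarith

end

theorem frechet_smooth_in_bidual_of_frechet_smooth_general
    {X : Type*} [NormedAddCommGroup X] [NormedSpace ℝ X]
    (x : X) (hF : FrechetSmoothPoint X x) :
    FrechetSmoothPoint (StrongDual ℝ (StrongDual ℝ X)) (inclusionInDoubleDual ℝ X x) := by
  rw [frechetSmoothPoint_iff_differentiableAt] at hF ⊢
  exact hF.hasFDerivAt.hasFDerivAt_norm_inclusionInDoubleDual.differentiableAt

theorem frechet_smooth_in_bidual_of_frechet_smooth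
    {X : Type*} [NormedAddCommGroup X] [NormedSpace ℝ X] [CompleteSpace X]
    (x : X) (hx : x ≠ 0) (hF : FrechetSmoothPoint X x) :
    FrechetSmoothPoint (StrongDual ℝ (StrongDual ℝ X)) (inclusionInDoubleDual ℝ X x) :=
  frechet_smooth_in_bidual_of_frechet_smooth_general x hF
end
end
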